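/- arXiv:2108.07334 — 4 statements merged into one kernel-verified Lean document; each statement's English description precedes it below -/
import Mathlib

section
/- For every ε ∈ (0,1) there exist constants C_ε, K_ε and n₀ such that the following holds for all n ≥ n₀. Let q ≥ 2C_ε√n, let G = ℤ/qℤ, let A = {a₁, …, a_n} be a multiset of elements of ℤ/qℤ such that at least εn of the a_i (counted with multiplicity) are reduced modulo q (i.e. a unit of ℤ/qℤ), and let x₁, …, x_n be iid random variables uniform on {−1, 1}. Then sup_{a ∈ ℤ/qℤ} P(a₁x₁ + ⋯ + a_nx_n = a) ≤ K_ε/√n. -/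
/-- The probability that the random walk `∑ i, A i * x i`, with `x i` iid uniform on
`{-1, 1}`, equals `a`. -/
noncomputable def pmProb {G : Type*} [AddCommGroup G] {n : ℕ} (A : Fin n → G) (a : G) : ℝ :=
  ({x : Fin n → Bool | (∑ i, (if x i then A i else -A i)) = a}.ncard : ℝ) / 2 ^ n

/-!
Fourier inversion on `ZMod q` gives
`q * P(∑ aᵢ xᵢ = a) ≤ ∑_ξ ∏ᵢ |cos (2π ξ aᵢ / q)|`.
Factors with `aᵢ` not a unit are bounded by `1`; for the `m ≥ ε n` units, AM-GM bounds the
product by the average of the `m`-th powers, and `ξ ↦ ξ aᵢ` permutes `ZMod q`, so everything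
reduces to `∑_ξ |cos (2π ξ / q)| ^ m`. Since `|cos (π x)| ≤ exp (-2 ‖x‖²)`, where `‖x‖` is the
distance to the nearest integer, this is at most four Gaussian sums `∑_t exp (-2m t² / q²)`,
each bounded by `1 + q √(π / 8m)` by comparison with the Gaussian integral.
This gives `P ≤ 4 / q + √(2π / m)`, which is `O_ε(1 / √n)` once `q ≥ 2 √n`.
-/

open Finset Real

lemma AddChar.map_sum_eq_prod {A M ι : Type*} [AddCommMonoid A] [CommMonoid M]
    (ψ : AddChar A M) (s : Finset ι) (f : ι → A) : ψ (∑ i ∈ s, f i) = ∏ i ∈ s, ψ (f i) := by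
  classical
  induction s using Finset.induction_on with
  | empty => simp
  | insert i s hi ih => rw [sum_insert hi, prod_insert hi, AddChar.map_add_eq_mul, ih]

section Fourier

variable {R : Type*} [CommRing R] [Fintype R] [DecidableEq R] {ψ : AddChar R ℂ}

lemma AddChar.IsPrimitive.sum_apply_mul_eq_ite (hψ : ψ.IsPrimitive) (y : R) :
    ∑ ξ, ψ (ξ * y) = if y = 0 then (Fintype.card R : ℂ) else 0 := by
  split_ifs with hy
  · simp [hy]
  · simpa [mul_comm] using AddChar.sum_eq_zero_of_ne_one (hψ hy)

lemma AddChar.IsPrimitive.card_mul_card_filter_sum_eq {n : ℕ} (hψ : ψ.IsPrimitive)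
    (A : Fin n → R) (a : R) :
    (Fintype.card R : ℂ) * #{x : Fin n → Bool | ∑ i, (if x i then A i else -A i) = a} =
      ∑ ξ, ψ (-(ξ * a)) * ∏ i, (ψ (ξ * A i) + ψ (-(ξ * A i))) := by
  have hprod (ξ : R) : ∏ i, (ψ (ξ * A i) + ψ (-(ξ * A i))) =
      ∑ x : Fin n → Bool, ψ (ξ * ∑ i, (if x i then A i else -A i)) := by
    have hpair (i : Fin n) : ψ (ξ * A i) + ψ (-(ξ * A i)) =
        ∑ b : Bool, ψ (ξ * if b then A i else -A i) := by
      simp [mul_neg]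
    simp_rw [hpair, Fintype.prod_sum, Finset.mul_sum, AddChar.map_sum_eq_prod]
  calc (Fintype.card R : ℂ) * #{x : Fin n → Bool | ∑ i, (if x i then A i else -A i) = a}
      = ∑ x : Fin n → Bool, ∑ ξ, ψ (ξ * (∑ i, (if x i then A i else -A i) - a)) := by
        simp_rw [hψ.sum_apply_mul_eq_ite, sub_eq_zero, sum_ite, sum_const_zero, sum_const,
          nsmul_eq_mul, add_zero, mul_comm]
    _ = _ := by
        rw [sum_comm]
        refine sum_congr rfl fun ξ _ ↦ ?_
        rw [hprod, Finset.mul_sum]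
        refine sum_congr rfl fun x _ ↦ ?_
        rw [← AddChar.map_add_eq_mul]
        ring_nf

lemma AddChar.IsPrimitive.card_mul_pmProb_le {n : ℕ} (hψ : ψ.IsPrimitive) (A : Fin n → R)
    (a : R) :
    Fintype.card R * pmProb A a ≤ ∑ ξ, ∏ i, ‖ψ (ξ * A i) + ψ (-(ξ * A i))‖ / 2 := by
  have hcount := congrArg norm (hψ.card_mul_card_filter_sum_eq A a)
  rw [norm_mul, Complex.norm_natCast, Complex.norm_natCast] at hcount
  have hsum := hcount.trans_le (norm_sum_le _ _)
  simp only [norm_mul, AddChar.norm_apply, one_mul, norm_prod] at hsum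
  rw [pmProb, Set.ncard_eq_toFinset_card', Set.toFinset_ofPred, mul_div_assoc',
    div_le_iff₀ (by positivity)]
  simp_rw [prod_div_distrib, prod_const, card_univ, Fintype.card_fin, ← sum_div]
  rwa [div_mul_cancel₀ _ (by positivity)]

end Fourier

lemma prod_le_inv_card_mul_sum_pow_card {ι : Type*} {s : Finset ι} (hs : s.Nonempty)
    {g : ι → ℝ} (hg : ∀ i ∈ s, 0 ≤ g i) : ∏ i ∈ s, g i ≤ (#s : ℝ)⁻¹ * ∑ i ∈ s, g i ^ #s := by
  have hcard : (#s : ℝ) ≠ 0 := by exact_mod_cast hs.card_pos.ne'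
  have hamgm := geom_mean_le_arith_mean_weighted s (fun _ ↦ (#s : ℝ)⁻¹) (fun i ↦ g i ^ #s)
    (fun _ _ ↦ by positivity) (by simp [hcard]) (fun i hi ↦ pow_nonneg (hg i hi) _)
  rw [mul_sum]
  convert hamgm using 2 with i hi
  rw [← rpow_natCast, ← rpow_mul (hg i hi), mul_inv_cancel₀ hcard, rpow_one]

lemma sum_prod_le_sum_pow_card {M : Type*} [Monoid M] [Fintype M] {n : ℕ} (A : Fin n → M)
    {U : Finset (Fin n)} (hU : U.Nonempty) (hunit : ∀ i ∈ U, IsUnit (A i)) {g : M → ℝ}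
    (hg0 : ∀ y, 0 ≤ g y) (hg1 : ∀ y, g y ≤ 1) :
    ∑ ξ, ∏ i, g (ξ * A i) ≤ ∑ ξ, g ξ ^ #U := by
  have hshift (i) (hi : i ∈ U) : ∑ ξ, g (ξ * A i) ^ #U = ∑ ξ, g ξ ^ #U :=
    Fintype.sum_equiv ((hunit i hi).unit.mulRight) _ _ fun _ ↦ rfl
  calc ∑ ξ, ∏ i, g (ξ * A i)
      ≤ ∑ ξ, ∏ i ∈ U, g (ξ * A i) := by
        refine sum_le_sum fun ξ _ ↦ ?_
        exact prod_le_prod_of_subset_of_le_one (subset_univ U) (fun _ _ ↦ hg0 _)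
          fun _ _ _ ↦ hg1 _
    _ ≤ ∑ ξ, (#U : ℝ)⁻¹ * ∑ i ∈ U, g (ξ * A i) ^ #U := by
        refine sum_le_sum fun ξ _ ↦ ?_
        exact prod_le_inv_card_mul_sum_pow_card hU fun i _ ↦ hg0 _
    _ = ∑ ξ, g ξ ^ #U := by
        rw [← mul_sum, sum_comm, sum_congr rfl hshift, sum_const, nsmul_eq_mul,
          inv_mul_cancel_left₀]
        exact_mod_cast hU.card_pos.ne'

lemma abs_cos_pi_mul_le_exp {x : ℝ} {r : ℤ} (hr : |x - r| ≤ 1 / 2) :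
    |cos (π * x)| ≤ exp (-2 * (x - r) ^ 2) := by
  have hshift : cos (π * x) = (-1) ^ r * cos (π * (x - r)) := by
    rw [← cos_add_int_mul_pi]; ring_nf
  have hπ : |π * (x - r)| ≤ π / 2 := by
    rw [abs_mul, abs_of_pos pi_pos]; nlinarith [pi_pos]
  have hcos_nonneg : 0 ≤ cos (π * (x - r)) :=
    cos_nonneg_of_mem_Icc ⟨by linarith [neg_abs_le (π * (x - r))], (le_abs_self _).trans hπ⟩
  have hquad := cos_le_one_sub_mul_cos_sq (hπ.trans (by linarith [pi_pos]))
  rw [hshift, abs_mul, abs_zpow, abs_neg, abs_one, one_zpow, one_mul, abs_of_nonneg hcos_nonneg]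
  calc cos (π * (x - r)) ≤ 1 - 2 * (x - r) ^ 2 := by
        convert hquad using 2; field_simp
    _ ≤ exp (-2 * (x - r) ^ 2) := by linarith [add_one_le_exp (-2 * (x - r) ^ 2)]

lemma sum_range_exp_neg_mul_sq_le {b : ℝ} (hb : 0 < b) (N : ℕ) :
    ∑ t ∈ range N, exp (-b * t ^ 2) ≤ 1 + √(π / b) / 2 := by
  cases N with
  | zero => rw [sum_range_zero]; positivity
  | succ N =>
    rw [sum_range_succ']
    have hanti : AntitoneOn (fun x : ℝ ↦ exp (-b * x ^ 2)) (Set.Icc 0 N) := by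
      intro x hx y _ hxy
      simp only [exp_le_exp, neg_mul, neg_le_neg_iff]
      exact mul_le_mul_of_nonneg_left (pow_le_pow_left₀ hx.1 hxy 2) hb.le
    have htail := hanti.sum_range_le_integral (integrable_exp_neg_mul_sq hb).integrableOn
      fun _ _ ↦ (exp_pos _).le
    rw [integral_gaussian_Ioi] at htail
    push_cast at htail ⊢
    rw [zero_pow two_ne_zero, mul_zero, exp_zero]
    linarith

/-- For `k ≤ q`, `foldDist q k` is the distance from `2 * k` to the nearest multiple of `q`,
i.e. `q` times the distance from `2 * k / q` to the nearest integer. -/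
def foldDist (q k : ℕ) : ℕ := min (2 * k) (min ((2 * k : ℤ) - q).natAbs (2 * q - 2 * k))

lemma abs_cos_le_exp_foldDist {q k : ℕ} (hk : k ≤ q) :
    |cos (2 * π * k / q)| ≤ exp (-2 * (foldDist q k / q : ℝ) ^ 2) := by
  rcases Nat.eq_zero_or_pos q with rfl | hq
  · simp [foldDist]
  obtain ⟨r, hr, hdist⟩ : ∃ r : ℤ, ((2 * k : ℤ) - r * q).natAbs = foldDist q k ∧
      2 * foldDist q k ≤ q := by
    unfold foldDist
    rcases le_or_gt (4 * k) q with h | h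
    · exact ⟨0, by omega⟩
    rcases le_or_gt (4 * k) (3 * q) with h' | h'
    · exact ⟨1, by omega⟩
    · exact ⟨2, by omega⟩
  have hq' : (0 : ℝ) < q := by exact_mod_cast hq
  have hx : |2 * (k : ℝ) / q - r| = foldDist q k / q := by
    rw [← hr, Nat.cast_natAbs, Int.cast_abs, ← abs_of_pos hq', ← abs_div, abs_of_pos hq']
    push_cast
    field_simp
  have hx_half : |2 * (k : ℝ) / q - r| ≤ 1 / 2 := by
    rw [hx, div_le_iff₀ hq']
    linarith [show (2 * foldDist q k : ℝ) ≤ q by exact_mod_cast hdist]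
  calc |cos (2 * π * k / q)| = |cos (π * (2 * k / q))| := by ring_nf
    _ ≤ exp (-2 * (2 * (k : ℝ) / q - r) ^ 2) := abs_cos_pi_mul_le_exp hx_half
    _ = exp (-2 * (foldDist q k / q : ℝ) ^ 2) := by rw [← sq_abs, hx]

lemma card_filter_foldDist_eq_le (q t : ℕ) [NeZero q] :
    #{ξ : ZMod q | foldDist q ξ.val = t} ≤ 4 := by
  have hmaps : ∀ ξ ∈ ({ξ : ZMod q | foldDist q ξ.val = t} : Finset (ZMod q)),
      2 * ξ.val ∈ ({t, q - t, q + t, 2 * q - t} : Finset ℕ) := by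
    intro ξ hξ
    have := ξ.val_lt
    rw [mem_filter_univ] at hξ
    unfold foldDist at hξ
    simp only [mem_insert, mem_singleton]
    omega
  refine (card_le_card_of_injOn _ hmaps fun ξ _ ξ' _ h ↦ ?_).trans card_le_four
  exact ZMod.val_injective q (by simpa using h)

lemma sum_comp_foldDist_le (q : ℕ) [NeZero q] {f : ℕ → ℝ} (hf : ∀ t, 0 ≤ f t) :
    ∑ ξ : ZMod q, f (foldDist q ξ.val) ≤ 4 * ∑ t ∈ range (q + 1), f t := by
  have hmaps : ∀ ξ ∈ (univ : Finset (ZMod q)), foldDist q ξ.val ∈ range (q + 1) := by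
    intro ξ _
    have := ξ.val_lt
    simp only [mem_range, foldDist]
    omega
  rw [← sum_fiberwise_of_maps_to hmaps, mul_sum]
  refine sum_le_sum fun t _ ↦ ?_
  rw [sum_congr rfl fun ξ hξ ↦ congrArg f (mem_filter.1 hξ).2, sum_const, nsmul_eq_mul]
  exact mul_le_mul_of_nonneg_right (by exact_mod_cast card_filter_foldDist_eq_le q t) (hf t)

namespace ZMod

lemma sum_abs_cos_pow_le (q : ℕ) [NeZero q] {m : ℕ} (hm : 0 < m) :
    ∑ ξ : ZMod q, |cos (2 * π * ξ.val / q)| ^ m ≤ 4 + 2 * q * √(π / (2 * m)) := by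
  have hq : (0 : ℝ) < q := by exact_mod_cast NeZero.pos q
  have hb : (0 : ℝ) < 2 * m / q ^ 2 := by positivity
  have hpoint (ξ : ZMod q) :
      |cos (2 * π * ξ.val / q)| ^ m ≤ exp (-(2 * m / q ^ 2) * (foldDist q ξ.val : ℝ) ^ 2) := by
    calc |cos (2 * π * ξ.val / q)| ^ m
        ≤ exp (-2 * (foldDist q ξ.val / q : ℝ) ^ 2) ^ m := by
          gcongr
          exact abs_cos_le_exp_foldDist ξ.val_lt.le
      _ = _ := by rw [← exp_nat_mul]; congr 1; field_simp
  calc ∑ ξ : ZMod q, |cos (2 * π * ξ.val / q)| ^ m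
      ≤ ∑ ξ : ZMod q, exp (-(2 * m / q ^ 2) * (foldDist q ξ.val : ℝ) ^ 2) :=
        sum_le_sum fun ξ _ ↦ hpoint ξ
    _ ≤ 4 * ∑ t ∈ range (q + 1), exp (-(2 * m / q ^ 2) * (t : ℝ) ^ 2) :=
        sum_comp_foldDist_le q (f := fun t : ℕ ↦ exp (-(2 * m / q ^ 2) * (t : ℝ) ^ 2))
          fun _ ↦ (exp_pos _).le
    _ ≤ 4 * (1 + √(π / (2 * m / q ^ 2)) / 2) := by
        gcongr
        exact sum_range_exp_neg_mul_sq_le hb _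
    _ = 4 + 2 * q * √(π / (2 * m)) := by
        rw [div_div_eq_mul_div, mul_div_right_comm, sqrt_mul' _ (sq_nonneg _), sqrt_sq hq.le]
        ring

lemma norm_stdAddChar_add_neg {q : ℕ} [NeZero q] (y : ZMod q) :
    ‖stdAddChar y + stdAddChar (-y)‖ / 2 = |cos (2 * π * y.val / q)| := by
  have h : stdAddChar y + stdAddChar (-y) = ((2 * cos (2 * π * y.val / q) : ℝ) : ℂ) := by
    rw [AddChar.map_neg_eq_inv, stdAddChar_apply, toCircle_apply, ← Complex.exp_neg]
    push_cast
    rw [Complex.two_cos]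
    ring_nf
  rw [h, Complex.norm_real, norm_mul, Real.norm_two, Real.norm_eq_abs]
  ring

lemma pmProb_le {q n : ℕ} [NeZero q] (A : Fin n → ZMod q) {U : Finset (Fin n)}
    (hU : U.Nonempty) (hunit : ∀ i ∈ U, IsUnit (A i)) (a : ZMod q) :
    pmProb A a ≤ 4 / q + 2 * √(π / (2 * #U)) := by
  have hq : (0 : ℝ) < q := by exact_mod_cast NeZero.pos q
  have hfourier := (isPrimitive_stdAddChar q).card_mul_pmProb_le A a
  simp_rw [norm_stdAddChar_add_neg, card] at hfourier
  have hunits := sum_prod_le_sum_pow_card A hU hunit (g := fun y ↦ |cos (2 * π * y.val / q)|)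
    (fun _ ↦ abs_nonneg _) fun _ ↦ abs_cos_le_one _
  have hgauss := sum_abs_cos_pow_le q hU.card_pos
  rw [div_add' _ _ _ hq.ne', le_div_iff₀' hq]
  linarith

end ZMod

theorem stmt3_general (ε : ℝ) (hε0 : 0 < ε) :
    ∃ (Cε Kε : ℝ) (n₀ : ℕ), 0 < Cε ∧ 0 < Kε ∧ ∀ n : ℕ, n₀ ≤ n →
      ∀ q : ℕ, 2 * Cε * Real.sqrt n ≤ (q : ℝ) →
        ∀ A : Fin n → ZMod q,
          ε * n ≤ ({i : Fin n | IsUnit (A i)}.ncard : ℝ) →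
          ∀ a : ZMod q, pmProb A a ≤ Kε / Real.sqrt n := by
  refine ⟨1, 2 + 2 * √(π / (2 * ε)), 1, one_pos, by positivity, ?_⟩
  intro n hn q hq A hA a
  classical
  have hn' : (0 : ℝ) < n := by exact_mod_cast hn
  have hsqrt_n : 0 < √n := sqrt_pos.2 hn'
  have hq' : 0 < (q : ℝ) := by linarith
  have : NeZero q := ⟨by exact_mod_cast hq'.ne'⟩
  set U : Finset (Fin n) := {i | IsUnit (A i)}
  have hUcard : ε * n ≤ #U := by rwa [← Set.ncard_coe_finset, coe_filter_univ]
  have hU : U.Nonempty :=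
    card_pos.1 (by exact_mod_cast (by positivity : 0 < ε * n).trans_le hUcard)
  have hsqrt_U : √(π / (2 * #U)) ≤ √(π / (2 * ε)) / √n := by
    rw [← sqrt_div' _ hn'.le, div_div, mul_assoc]
    gcongr
  have hq_inv : 4 / (q : ℝ) ≤ 2 / √n := by
    rw [div_le_div_iff₀ hq' hsqrt_n]
    linarith
  calc pmProb A a ≤ 4 / q + 2 * √(π / (2 * #U)) := ZMod.pmProb_le A hU (by simp [U]) a
    _ ≤ (2 + 2 * √(π / (2 * ε))) / √n := by rw [add_div, mul_div_assoc]; linarith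

theorem stmt3 (ε : ℝ) (hε0 : 0 < ε) (hε1 : ε < 1) :
    ∃ (Cε Kε : ℝ) (n₀ : ℕ), 0 < Cε ∧ 0 < Kε ∧ ∀ n : ℕ, n₀ ≤ n →
      ∀ q : ℕ, 2 * Cε * Real.sqrt n ≤ (q : ℝ) →
        ∀ A : Fin n → ZMod q,
          ε * n ≤ ({i : Fin n | IsUnit (A i)}.ncard : ℝ) →
          ∀ a : ZMod q, pmProb A a ≤ Kε / Real.sqrt n :=
  stmt3_general ε hε0
end

section
/- Let G be an abelian group, let X ⊆ G with 0 ∈ X, let k be a positive integer, let H be a finite subgroup of G, and let P = {x₁a₁ + ⋯ + x_d a_d : x_i ∈ ℤ, |x_i| ≤ N_i} be a symmetric GAP such that the coset-progression H + P is 2-proper and kX ⊆ H + P, where kX is the k-fold iterated sumset of X. Then X ⊆ H + {x₁a₁ + ⋯ + x_d a_d : x_i ∈ ℤ, |x_i| ≤ 2N_i/k}. -/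
open Pointwise

/-- A generalized arithmetic progression (GAP) of rank `r` in an additive abelian group,
given by its generators and dimensions. -/
structure GAPData (G : Type*) [AddCommGroup G] (r : ℕ) where
  g₀ : G
  g : Fin r → G
  N : Fin r → ℤ
  N' : Fin r → ℤ
  hle : ∀ i, N i ≤ N' i

namespace GAPData

variable {G : Type*} [AddCommGroup G] {r : ℕ}

/-- The set of elements of the GAP. -/
def toSet (P : GAPData G r) : Set G :=
  {x | ∃ m : Fin r → ℤ, (∀ i, P.N i ≤ m i ∧ m i ≤ P.N' i) ∧ x = P.g₀ + ∑ i, m i • P.g i}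

/-- A GAP is proper if every element has a unique representation. -/
def IsProper (P : GAPData G r) : Prop :=
  ∀ m m' : Fin r → ℤ, (∀ i, P.N i ≤ m i ∧ m i ≤ P.N' i) →
    (∀ i, P.N i ≤ m' i ∧ m' i ≤ P.N' i) →
    P.g₀ + ∑ i, m i • P.g i = P.g₀ + ∑ i, m' i • P.g i → m = m'

/-- A GAP is symmetric if `g₀ = 0` and `N i = -N' i` for all `i`. -/
def IsSymmetric (P : GAPData G r) : Prop :=
  P.g₀ = 0 ∧ ∀ i, P.N i = -P.N' i

/-- The `t`-fold dilate `P_t` of a GAP, whose dimensions are multiplied by `t`. -/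
def dilate (P : GAPData G r) (t : ℕ) : GAPData G r where
  g₀ := P.g₀
  g := P.g
  N := fun i => (t : ℤ) * P.N i
  N' := fun i => (t : ℤ) * P.N' i
  hle := fun i => mul_le_mul_of_nonneg_left (P.hle i) (Int.natCast_nonneg t)

end GAPData

/-- `H + P` is a proper coset-progression: `H` is a finite subgroup, `P` is a proper GAP and
`|H + P| = |H| * |P|`. -/
def IsProperCosetProg {G : Type*} [AddCommGroup G] {r : ℕ}
    (H : AddSubgroup G) (P : GAPData G r) : Prop :=
  (H : Set G).Finite ∧ P.IsProper ∧
    ((H : Set G) + P.toSet).ncard = (H : Set G).ncard * P.toSet.ncard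

/-- A symmetric coset-progression `H + P` is `t`-proper if `H + P_t` is proper. -/
def IsTProperCosetProg {G : Type*} [AddCommGroup G] (t : ℕ) {r : ℕ}
    (H : AddSubgroup G) (P : GAPData G r) : Prop :=
  IsProperCosetProg H (P.dilate t)

/-- The `k`-fold iterated sumset `kX = X + ⋯ + X`. -/
def iterSumset {G : Type*} [AddCommGroup G] : ℕ → Set G → Set G
  | 0, _ => {0}
  | k + 1, X => X + iterSumset k X

/-!
Write `j • x = h_j + ∑ i, m_j i • g_i` with `h_j ∈ H` and `|m_j i| ≤ N_i` for `0 ≤ j ≤ k`; this is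
possible because `j • x ∈ kX` (as `0 ∈ X`). Each difference `(j+1) • x - j • x = x` is then
represented with coefficients `m_{j+1} - m_j` of size at most `2 N_i`, so 2-properness forces all these
differences to equal `u := m_1 - m_0`. Telescoping gives `k • u = m_k - m_0`, whence `k |u_i| ≤ 2 N_i`,
and `x = (h_1 - h_0) + ∑ i, u_i • g_i`.
-/

theorem iterSumset_eq_nsmul {G : Type*} [AddCommGroup G] (X : Set G) :
    ∀ k, iterSumset k X = k • X
  | 0 => (zero_nsmul X).symm
  | k + 1 => by rw [iterSumset, iterSumset_eq_nsmul X k, succ_nsmul']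

namespace GAPData

variable {G : Type*} [AddCommGroup G] {r : ℕ}

theorem toSet_finite (P : GAPData G r) : P.toSet.Finite := by
  refine ((Set.finite_Icc P.N P.N').image fun m => P.g₀ + ∑ i, m i • P.g i).subset ?_
  rintro y ⟨m, hm, rfl⟩
  exact ⟨m, ⟨fun i => (hm i).1, fun i => (hm i).2⟩, rfl⟩

namespace IsSymmetric

variable {P : GAPData G r}

theorem dilate (hP : P.IsSymmetric) (t : ℕ) : (P.dilate t).IsSymmetric :=
  ⟨hP.1, fun i => by simp [GAPData.dilate, hP.2 i]⟩

theorem mem_toSet_iff (hP : P.IsSymmetric) {y : G} :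
    y ∈ P.toSet ↔ ∃ m : Fin r → ℤ, (∀ i, |m i| ≤ P.N' i) ∧ y = ∑ i, m i • P.g i := by
  simp only [toSet, Set.mem_ofPred_eq, hP.1, hP.2, zero_add, ← abs_le]

theorem sum_smul_injective (hP : P.IsSymmetric) (hprop : P.IsProper) {m m' : Fin r → ℤ}
    (hm : ∀ i, |m i| ≤ P.N' i) (hm' : ∀ i, |m' i| ≤ P.N' i)
    (heq : ∑ i, m i • P.g i = ∑ i, m' i • P.g i) : m = m' :=
  hprop m m' (fun i => by simpa [hP.2 i, abs_le] using hm i)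
    (fun i => by simpa [hP.2 i, abs_le] using hm' i) (by rw [heq])

end IsSymmetric

end GAPData

section CosetProgression

variable {G : Type*} [AddCommGroup G] {r : ℕ} {H : AddSubgroup G} {P : GAPData G r}

theorem IsProperCosetProg.add_injOn (hHP : IsProperCosetProg H P) :
    Set.InjOn (fun q : G × G => q.1 + q.2) ((H : Set G) ×ˢ P.toSet) := by
  classical
  obtain ⟨hH, -, hcard⟩ := hHP
  have hP := P.toSet_finite
  rw [← hH.coe_toFinset, ← hP.coe_toFinset, ← Finset.card_add_iff, ← Set.ncard_coe_finset,
    Finset.coe_add, hH.coe_toFinset, hP.coe_toFinset, hcard, Set.ncard_eq_toFinset_card _ hH,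
    Set.ncard_eq_toFinset_card _ hP]

theorem IsTProperCosetProg.sum_smul_injective (hP : P.IsSymmetric) {t : ℕ}
    (hHP : IsTProperCosetProg t H P) {h h' : G} (hh : h ∈ H) (hh' : h' ∈ H)
    {m m' : Fin r → ℤ} (hm : ∀ i, |m i| ≤ t * P.N' i) (hm' : ∀ i, |m' i| ≤ t * P.N' i)
    (heq : h + ∑ i, m i • P.g i = h' + ∑ i, m' i • P.g i) : m = m' := by
  have hPt := hP.dilate t
  have hsum := congrArg Prod.snd <| hHP.add_injOn (x₁ := (h, _)) (x₂ := (h', _))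
    ⟨hh, hPt.mem_toSet_iff.mpr ⟨m, hm, rfl⟩⟩ ⟨hh', hPt.mem_toSet_iff.mpr ⟨m', hm', rfl⟩⟩ heq
  exact hPt.sum_smul_injective hHP.2.1 hm hm' hsum

theorem IsTProperCosetProg.mem_add_of_forall_nsmul_mem (hP : P.IsSymmetric)
    (hHP : IsTProperCosetProg 2 H P) {k : ℕ} (hk : 0 < k) {x : G}
    (hx : ∀ j ≤ k, j • x ∈ (H : Set G) + P.toSet) :
    x ∈ (H : Set G) +
      {y : G | ∃ u : Fin r → ℤ, (∀ i, (k : ℤ) * |u i| ≤ 2 * P.N' i) ∧ y = ∑ i, u i • P.g i} := by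
  have hrep : ∀ j ≤ k, ∃ h ∈ H, ∃ m : Fin r → ℤ,
      (∀ i, |m i| ≤ P.N' i) ∧ j • x = h + ∑ i, m i • P.g i := by
    intro j hj
    obtain ⟨h, hh, y, hy, hxy⟩ := hx j hj
    obtain ⟨m, hm, rfl⟩ := hP.mem_toSet_iff.mp hy
    exact ⟨h, hh, m, hm, hxy.symm⟩
  choose! h hH m hm hxm using hrep
  have hx_eq : ∀ j < k, (h (j + 1) - h j) + ∑ i, (m (j + 1) - m j) i • P.g i = x := by
    intro j hj
    simp only [Pi.sub_apply, sub_smul, Finset.sum_sub_distrib]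
    rw [← add_sub_add_comm, ← hxm _ hj, ← hxm _ hj.le, succ_nsmul, add_sub_cancel_left]
  have hbound : ∀ a ≤ k, ∀ b ≤ k, ∀ i, |(m a - m b) i| ≤ (2 : ℕ) * P.N' i := fun a ha b hb i =>
    calc |(m a - m b) i| ≤ |m a i| + |m b i| := abs_sub _ _
      _ ≤ (2 : ℕ) * P.N' i := by push_cast; linarith [hm a ha i, hm b hb i]
  have hstep : ∀ j < k, m (j + 1) - m j = m 1 - m 0 := fun j hj =>
    hHP.sum_smul_injective hP (sub_mem (hH _ hj) (hH _ hj.le)) (sub_mem (hH 1 hk) (hH 0 hk.le))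
      (hbound _ hj _ hj.le) (hbound _ hk _ hk.le) ((hx_eq j hj).trans (hx_eq 0 hk).symm)
  have htele : m k - m 0 = k • (m 1 - m 0) := by
    rw [← Finset.sum_range_sub, Finset.sum_congr rfl fun j hj => hstep j (Finset.mem_range.mp hj),
      Finset.sum_const, Finset.card_range]
  refine ⟨h 1 - h 0, sub_mem (hH 1 hk) (hH 0 hk.le), _, ⟨m 1 - m 0, fun i => ?_, rfl⟩, hx_eq 0 hk⟩
  calc (k : ℤ) * |(m 1 - m 0) i| = |(m k - m 0) i| := by
        rw [htele, Pi.smul_apply, nsmul_eq_mul, abs_mul, Nat.abs_cast]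
    _ ≤ 2 * P.N' i := by exact_mod_cast hbound k le_rfl 0 hk.le i

end CosetProgression

theorem stmt15 (G : Type) [AddCommGroup G] (X : Set G) (h0 : (0 : G) ∈ X)
    (k : ℕ) (hk : 0 < k) (H : AddSubgroup G) (d : ℕ) (P : GAPData G d)
    (hsym : P.IsSymmetric) (h2proper : IsTProperCosetProg 2 H P)
    (hsub : iterSumset k X ⊆ (H : Set G) + P.toSet) :
    X ⊆ (H : Set G) +
      {y : G | ∃ x : Fin d → ℤ, (∀ i, (k : ℤ) * |x i| ≤ 2 * P.N' i) ∧
        y = ∑ i, x i • P.g i} := by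
  intro x hx
  refine h2proper.mem_add_of_forall_nsmul_mem hsym hk fun j hj => hsub ?_
  rw [iterSumset_eq_nsmul]
  exact Set.nsmul_subset_nsmul_right h0 hj (Set.nsmul_mem_nsmul hx)
end

section
/- There exists an absolute constant c > 0 such that the following holds. Let n ≥ 1 and 1 ≤ m ≤ n be integers, set α = m/n, let A = {a₁, …, a_n} be a multiset of real numbers, and let ξ be a Bernoulli random variable with P(ξ = 1) = α and P(ξ = 0) = 1 − α. Then ρ_ξ(A) ≥ c · ρ*_m(A) / √(nα). -/
/-- `ρ*_m(A)`: the largest concentration of sums of `m`-element sub(multi)sets of `A`. -/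
noncomputable def rhoStarM (n m : ℕ) (A : Fin n → ℝ) : ℝ :=
  ⨆ a : ℝ, ({s : Finset (Fin n) | s.card = m ∧ ∑ i ∈ s, A i = a}.ncard : ℝ) /
    (n.choose m : ℝ)

/-- `ρ_ξ(A)` for `ξ` Bernoulli of parameter `α`: the largest concentration probability of
`∑ i, A i * x i` where the `x i` are iid, equal to `1` with probability `α` and to `0`
with probability `1 - α`. -/
noncomputable def bernoulliRho {n : ℕ} (A : Fin n → ℝ) (α : ℝ) : ℝ :=
  ⨆ a : ℝ, ∑ x : Fin n → Bool, (∏ i, if x i then α else 1 - α) *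
    (if (∑ i, if x i then A i else 0) = a then 1 else 0)

/-!
Every `m`-subset `S` with `∑ i ∈ S, A i = a` is, through its indicator vector, an outcome of
probability `α ^ m * (1 - α) ^ (n - m)` with `∑ i, A i * x i = a`. Hence
`ρ_ξ(A) ≥ ρ*_m(A) * C(n, m) * α ^ m * (1 - α) ^ (n - m)`, and for `α = m / n` this factor is the
mode of the binomial distribution, which Stirling's formula bounds below by `1 / (4 √m)`.
-/

open Real Nat Finset

namespace Stirling

theorem sqrt_two_pi_mul_pow_le_factorial_mul_exp_pow (n : ℕ) :
    √(2 * π * n) * (n : ℝ) ^ n ≤ n ! * exp 1 ^ n := by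
  have h := le_factorial_stirling n
  rw [div_pow, ← mul_div_assoc, div_le_iff₀ (by positivity)] at h
  exact h

theorem factorial_mul_exp_pow_le {n : ℕ} (hn : n ≠ 0) :
    n ! * exp 1 ^ n ≤ exp 1 * √n * (n : ℝ) ^ n := by
  have h : stirlingSeq n ≤ exp 1 / √2 := by
    rw [← stirlingSeq_one]
    obtain ⟨k, rfl⟩ := exists_eq_succ_of_ne_zero hn
    exact stirlingSeq'_antitone (Nat.zero_le k)
  rw [stirlingSeq, div_le_div_iff₀ (by positivity) (by positivity),
    sqrt_mul' _ (Nat.cast_nonneg n), div_pow] at h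
  field_simp at h
  nlinarith [sqrt_pos.2 (show (0:ℝ) < 2 by norm_num)]

end Stirling

theorem Real.exp_one_sq_le_four_mul_sqrt_two_pi : exp 1 ^ 2 ≤ 4 * √(2 * π) := by
  have h : (5 / 2 : ℝ) ≤ √(2 * π) := Real.le_sqrt_of_sq_le (by nlinarith [pi_gt_d2])
  nlinarith [exp_one_lt_d9, exp_pos 1]

theorem Nat.factorial_mul_factorial_mul_pow_le {m k : ℕ} (hm : m ≠ 0) (hk : k ≠ 0) :
    (m ! * k ! * ((m + k : ℕ) : ℝ) ^ (m + k) : ℝ) ≤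
      4 * √m * ((m + k) ! * ((m : ℝ) ^ m * (k : ℝ) ^ k)) := by
  set N := m + k
  have hm' := Stirling.factorial_mul_exp_pow_le hm
  have hk' := Stirling.factorial_mul_exp_pow_le hk
  have hN := Stirling.sqrt_two_pi_mul_pow_le_factorial_mul_exp_pow N
  have hkN : √(k : ℝ) ≤ √(N : ℝ) := Real.sqrt_le_sqrt (by exact_mod_cast Nat.le_add_left k m)
  have hsplit : √(2 * π * N) = √(2 * π) * √N := sqrt_mul (by positivity) _
  refine le_of_mul_le_mul_right (a := exp 1 ^ N * √(2 * π * N)) ?_ (by positivity)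
  calc (m ! * k ! * (N : ℝ) ^ N) * (exp 1 ^ N * √(2 * π * N))
      = (m ! * exp 1 ^ m) * (k ! * exp 1 ^ k) * (√(2 * π * N) * (N : ℝ) ^ N) := by
        rw [pow_add]; ring
    _ ≤ (exp 1 * √m * (m : ℝ) ^ m) * (exp 1 * √k * (k : ℝ) ^ k) * (N ! * exp 1 ^ N) := by
        gcongr
    _ = exp 1 ^ 2 * √k * (√m * (N ! * ((m : ℝ) ^ m * (k : ℝ) ^ k)) * exp 1 ^ N) := by ring
    _ ≤ 4 * √(2 * π) * √N * (√m * (N ! * ((m : ℝ) ^ m * (k : ℝ) ^ k)) * exp 1 ^ N) := by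
        gcongr
        exact Real.exp_one_sq_le_four_mul_sqrt_two_pi
    _ = (4 * √m * (N ! * ((m : ℝ) ^ m * (k : ℝ) ^ k))) * (exp 1 ^ N * √(2 * π * N)) := by
        rw [hsplit]; ring

theorem Nat.one_div_four_sqrt_le_choose_mul_pow_mul_pow {n m : ℕ} (hm : m ≠ 0) (hmn : m ≤ n) :
    1 / (4 * √m) ≤ n.choose m * ((m : ℝ) / n) ^ m * (1 - (m : ℝ) / n) ^ (n - m) := by
  have hm0 : (0 : ℝ) < m := by positivity
  obtain ⟨k, rfl⟩ := Nat.exists_eq_add_of_le hmn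
  have hn0 : (0 : ℝ) < ((m + k : ℕ) : ℝ) := by positivity
  rcases eq_or_ne k 0 with rfl | hk
  · have hsqrt : (1 : ℝ) ≤ √m := one_le_sqrt.2 (by exact_mod_cast Nat.one_le_iff_ne_zero.2 hm)
    rw [add_zero, Nat.choose_self, div_self hm0.ne', Nat.sub_self]
    simp only [Nat.cast_one, one_pow, pow_zero, mul_one]
    rw [div_le_one (by positivity)]
    linarith
  have hchoose : ((m + k).choose m : ℝ) = (m + k) ! / (m ! * k !) := by
    rw [Nat.cast_choose ℝ hmn, Nat.add_sub_cancel_left]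
  have hcompl : 1 - (m : ℝ) / (m + k : ℕ) = k / (m + k : ℕ) := by
    field_simp; push_cast; ring
  rw [hchoose, hcompl, Nat.add_sub_cancel_left, div_pow, div_pow, div_le_iff₀ (by positivity)]
  have hstirling := Nat.factorial_mul_factorial_mul_pow_le hm hk
  rw [pow_add] at hstirling
  field_simp
  linarith

theorem Finset.prod_ite_decide_mem {ι M : Type*} [Fintype ι] [DecidableEq ι] [CommMonoid M]
    (s : Finset ι) (a b : M) :
    ∏ i, (if decide (i ∈ s) then a else b) = a ^ #s * b ^ (Fintype.card ι - #s) := by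
  simp only [decide_eq_true_eq, prod_ite, prod_const, filter_mem_eq_inter, univ_inter,
    ← card_compl, filter_not]
  simp [compl_eq_univ_sdiff]

noncomputable def bernoulliProb {n : ℕ} (A : Fin n → ℝ) (α a : ℝ) : ℝ :=
  ∑ x : Fin n → Bool, (∏ i, if x i then α else 1 - α) *
    (if (∑ i, if x i then A i else 0) = a then 1 else 0)

section
variable {n : ℕ} (A : Fin n → ℝ) {α : ℝ}

theorem bernoulliProb_le_one (hα₀ : 0 ≤ α) (hα₁ : α ≤ 1) (a : ℝ) : bernoulliProb A α a ≤ 1 := by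
  calc bernoulliProb A α a ≤ ∑ x : Fin n → Bool, ∏ i, if x i then α else 1 - α := by
        refine sum_le_sum fun x _ => mul_le_of_le_one_right ?_ ?_
        · exact prod_nonneg fun i _ => by split <;> linarith
        · split <;> norm_num
    _ = ∏ _i : Fin n, ∑ b : Bool, if b then α else 1 - α :=
        (Fintype.prod_sum fun _ (b : Bool) => if b then α else 1 - α).symm
    _ = 1 := by simp

theorem card_mul_pow_le_bernoulliProb (hα₀ : 0 ≤ α) (hα₁ : α ≤ 1) (m : ℕ) (a : ℝ) :
    #{s : Finset (Fin n) | #s = m ∧ ∑ i ∈ s, A i = a} * (α ^ m * (1 - α) ^ (n - m)) ≤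
      bernoulliProb A α a := by
  set S : Finset (Finset (Fin n)) := {s | #s = m ∧ ∑ i ∈ s, A i = a}
  set χ : Finset (Fin n) → Fin n → Bool := fun s i => decide (i ∈ s)
  have hχ : Set.InjOn χ S := fun s _ t _ h => by
    ext i; simpa [χ] using congrFun h i
  calc #S * (α ^ m * (1 - α) ^ (n - m)) = ∑ x ∈ S.image χ, (∏ i, if x i then α else 1 - α) *
        (if (∑ i, if x i then A i else 0) = a then 1 else 0) := by
        rw [sum_image hχ, ← nsmul_eq_mul, ← sum_const]
        refine sum_congr rfl fun s hs => ?_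
        obtain ⟨hcard, hsum⟩ := (mem_filter.1 hs).2
        rw [Finset.prod_ite_decide_mem, Fintype.card_fin, hcard]
        simp [χ, hsum]
    _ ≤ bernoulliProb A α a := by
        refine sum_le_sum_of_subset_of_nonneg (subset_univ _) fun x _ _ => mul_nonneg ?_ ?_
        · exact prod_nonneg fun i _ => by split <;> linarith
        · split <;> norm_num
end

theorem rhoStarM_mul_le_bernoulliRho {n m : ℕ} (A : Fin n → ℝ) {α : ℝ} (hα₀ : 0 ≤ α)
    (hα₁ : α ≤ 1) (hmn : m ≤ n) :
    rhoStarM n m A * (n.choose m * α ^ m * (1 - α) ^ (n - m)) ≤ bernoulliRho A α := by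
  have hC : (0 : ℝ) < n.choose m := by exact_mod_cast Nat.choose_pos hmn
  have hbdd : BddAbove (Set.range (bernoulliProb A α)) :=
    ⟨1, Set.forall_mem_range.2 (bernoulliProb_le_one A hα₀ hα₁)⟩
  rw [rhoStarM, Real.iSup_mul_of_nonneg (by have := sub_nonneg.2 hα₁; positivity)]
  refine ciSup_le fun a => ?_
  calc _ = #{s : Finset (Fin n) | #s = m ∧ ∑ i ∈ s, A i = a} * (α ^ m * (1 - α) ^ (n - m)) := by
        rw [Set.ncard_eq_toFinset_card', Set.toFinset_ofPred]
        field_simp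
    _ ≤ bernoulliProb A α a := card_mul_pow_le_bernoulliProb A hα₀ hα₁ m a
    _ ≤ bernoulliRho A α := le_ciSup hbdd a

theorem stmt18 :
    ∃ c : ℝ, 0 < c ∧ ∀ n m : ℕ, 1 ≤ n → 1 ≤ m → m ≤ n →
      ∀ (A : Fin n → ℝ) (α : ℝ), α = (m : ℝ) / (n : ℝ) →
        c * rhoStarM n m A / Real.sqrt ((n : ℝ) * α) ≤ bernoulliRho A α := by
  refine ⟨1 / 4, by norm_num, fun n m hn hm hmn A α hα => ?_⟩
  have hn₀ : (n : ℝ) ≠ 0 := by positivity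
  have hα₀ : 0 ≤ α := hα ▸ by positivity
  have hα₁ : α ≤ 1 := hα ▸ div_le_one_of_le₀ (by exact_mod_cast hmn) (Nat.cast_nonneg n)
  have hnα : (n : ℝ) * α = m := by rw [hα]; field_simp
  have hρ₀ : 0 ≤ rhoStarM n m A := Real.iSup_nonneg fun a => by positivity
  calc 1 / 4 * rhoStarM n m A / √(n * α) = rhoStarM n m A * (1 / (4 * √m)) := by
        rw [hnα]; ring
    _ ≤ rhoStarM n m A * (n.choose m * α ^ m * (1 - α) ^ (n - m)) := by
        rw [hα]
        exact mul_le_mul_of_nonneg_left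
          (Nat.one_div_four_sqrt_le_choose_mul_pow_mul_pow (by omega) hmn) hρ₀
    _ ≤ bernoulliRho A α := rhoStarM_mul_le_bernoulliRho A hα₀ hα₁ hmn
end

section
/- There exist an absolute constant K and an absolute constant s₀ such that the following holds. Let k and r be positive integers and let s ≥ s₀ be an integer. Then the number of k-tuples (x₁, …, x_k) of vectors x_i = (x_{i1}, …, x_{ir}) ∈ ℤ^r such that α_j ≥ 1 for every j and ∏_{j=1}^{r} α_j ≤ s, where α_j := max{|x_{1j}|, …, |x_{kj}|}, is at most K^{kr} · s^k · (log s)^{r−1}. -/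
/-!
Group the tuples by their column maxima `α = (α₁, …, αᵣ)`. For fixed `α` the `j`-th column
ranges over the integer vectors of sup-norm exactly `αⱼ`, i.e. the hollow box `box αⱼ` in
`ℤᵏ`, which has `(2αⱼ + 1)ᵏ - (2αⱼ - 1)ᵏ ≤ 6ᵏ αⱼᵏ⁻¹` points; as `∏ αⱼ ≤ s`, each fibre has
at most `6ᵏʳ sᵏ⁻¹` elements. The admissible `α` are the `r`-tuples of positive integers with
product at most `s`; splitting off the first coordinate, their number `Dᵣ(s)` satisfies
`Dᵣ(s) ≤ ∑_{d ≤ s} Dᵣ₋₁(s / d)`, so `Dᵣ(s) ≤ s (1 + log s)ʳ⁻¹` by the harmonic bound.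
Finally `1 + log s ≤ 2 log s` for `s ≥ 3`, which gives `K = 12`.
-/

/-- `maxAbs x j = α_j`, the maximum of `|x i j|` over `i`. -/
def maxAbs {k r : ℕ} (x : Fin k → Fin r → ℤ) (j : Fin r) : ℕ :=
  Finset.univ.sup fun i => (x i j).natAbs

open Finset

lemma two_mul_mul_three_pow_pred_le_six_pow (n : ℕ) : 2 * n * 3 ^ (n - 1) ≤ 6 ^ n := by
  rcases n with _ | n
  · simp
  have := Nat.lt_two_pow_self (n := n)
  calc 2 * (n + 1) * 3 ^ n ≤ (2 * 2 ^ n * 3) * 3 ^ n := Nat.mul_le_mul_right _ (by omega)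
    _ = 6 ^ (n + 1) := by rw [show 6 = 2 * 3 by rfl, mul_pow]; ring

section box
variable {ι : Type*} [Fintype ι] [DecidableEq ι]

lemma Pi.mem_Icc_neg_natCast_iff {v : ι → ℤ} {m : ℕ} :
    v ∈ Icc (-m : ι → ℤ) m ↔ univ.sup (fun i => (v i).natAbs) ≤ m := by
  simp only [Finset.mem_Icc, Finset.sup_le_iff, mem_univ, true_imp_iff, Pi.le_def,
    ← forall_and]
  refine forall_congr' fun i => ?_
  simp only [Pi.neg_apply, Pi.natCast_apply]
  omega

lemma Pi.mem_box_iff_sup_natAbs {v : ι → ℤ} {m : ℕ} :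
    v ∈ box m ↔ univ.sup (fun i => (v i).natAbs) = m := by
  cases m with
  | zero => simp [funext_iff]
  | succ m =>
    rw [box_succ_eq_sdiff, mem_sdiff, Nat.succ_eq_add_one,
      Pi.mem_Icc_neg_natCast_iff, Pi.mem_Icc_neg_natCast_iff]
    omega

lemma Pi.card_box_succ (m : ℕ) :
    #(box (m + 1) : Finset (ι → ℤ)) =
      (2 * m + 3) ^ Fintype.card ι - (2 * m + 1) ^ Fintype.card ι := by
  rw [box_succ_eq_sdiff, card_sdiff_of_subset, Pi.card_Icc, Pi.card_Icc]
  · simp only [Pi.neg_apply, Pi.natCast_apply, Int.card_Icc, prod_const, card_univ]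
    congr 2 <;> omega
  · exact Icc_subset_Icc (by simp) (by simp)

lemma Pi.card_box_le {m : ℕ} (hm : m ≠ 0) :
    #(box m : Finset (ι → ℤ)) ≤ 6 ^ Fintype.card ι * m ^ (Fintype.card ι - 1) := by
  obtain ⟨m, rfl⟩ := Nat.exists_eq_add_one_of_ne_zero hm
  set n := Fintype.card ι
  have hdiff : (2 * m + 3) ^ n - (2 * m + 1) ^ n ≤ 2 * n * (2 * m + 3) ^ (n - 1) := by
    have hle : (2 * m + 1) ^ n ≤ (2 * m + 3) ^ n := by gcongr; omega
    zify [hle]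
    calc _ ≤ |((2 * m + 3) ^ n - (2 * m + 1) ^ n : ℤ)| := le_abs_self _
      _ ≤ |(2 * m + 3 : ℤ) - (2 * m + 1)| * n * max |(2 * m + 3 : ℤ)| |2 * m + 1| ^ (n - 1) :=
        abs_pow_sub_pow_le _ _ _
      _ = _ := by
        rw [show (2 * m + 3 : ℤ) - (2 * m + 1) = 2 by ring, abs_two,
          abs_of_nonneg (by positivity : (0 : ℤ) ≤ 2 * m + 3),
          abs_of_nonneg (by positivity : (0 : ℤ) ≤ 2 * m + 1), max_eq_left (by omega)]
  calc #(box (m + 1) : Finset (ι → ℤ)) = (2 * m + 3) ^ n - (2 * m + 1) ^ n := Pi.card_box_succ m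
    _ ≤ 2 * n * (2 * m + 3) ^ (n - 1) := hdiff
    _ ≤ 2 * n * (3 ^ (n - 1) * (m + 1) ^ (n - 1)) := by rw [← mul_pow]; gcongr; omega
    _ ≤ 6 ^ n * (m + 1) ^ (n - 1) := by
      rw [← mul_assoc]; gcongr; exact two_mul_mul_three_pow_pred_le_six_pow n

end box

def posTuplesProdLe (r s : ℕ) : Finset (Fin r → ℕ) :=
  {a ∈ Fintype.piFinset fun _ => Icc 1 s | ∏ j, a j ≤ s}

lemma mem_posTuplesProdLe {r s : ℕ} {a : Fin r → ℕ} :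
    a ∈ posTuplesProdLe r s ↔ (∀ j, 1 ≤ a j) ∧ ∏ j, a j ≤ s := by
  simp only [posTuplesProdLe, mem_filter, Fintype.mem_piFinset, Finset.mem_Icc]
  refine ⟨fun h => ⟨fun j => (h.1 j).1, h.2⟩, fun h => ⟨fun j => ⟨h.1 j, ?_⟩, h.2⟩⟩
  exact (single_le_prod' (fun i _ => h.1 i) (mem_univ j)).trans h.2

lemma posTuplesProdLe_succ_subset (r s : ℕ) :
    posTuplesProdLe (r + 1) s ⊆
      (Icc 1 s).biUnion fun d => (posTuplesProdLe r (s / d)).image (Fin.cons d) := by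
  intro a ha
  rw [mem_posTuplesProdLe, Fin.prod_univ_succ] at ha
  obtain ⟨hpos, hprod⟩ := ha
  simp only [mem_biUnion, mem_image, Finset.mem_Icc, mem_posTuplesProdLe]
  refine ⟨a 0, ⟨hpos 0, le_of_mul_le_of_one_le_left hprod ?_⟩,
    Fin.tail a, ⟨fun j => hpos j.succ, ?_⟩, Fin.cons_self_tail a⟩
  · exact one_le_prod' fun j _ => hpos j.succ
  · rw [Nat.le_div_iff_mul_le (hpos 0), mul_comm]; exact hprod

lemma card_posTuplesProdLe_succ_le (r s : ℕ) :
    (#(posTuplesProdLe (r + 1) s) : ℝ) ≤ s * (1 + Real.log s) ^ r := by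
  induction r generalizing s with
  | zero =>
    have : #(posTuplesProdLe 1 s) ≤ s := (card_filter_le _ _).trans (by simp)
    simpa using this
  | succ r ih =>
    calc (#(posTuplesProdLe (r + 2) s) : ℝ)
        ≤ ∑ d ∈ Icc 1 s, (#(posTuplesProdLe (r + 1) (s / d)) : ℝ) := by
          exact_mod_cast (card_le_card (posTuplesProdLe_succ_subset _ s)).trans
            (card_biUnion_le.trans (sum_le_sum fun d _ => card_image_le))
      _ ≤ ∑ d ∈ Icc 1 s, (s / d : ℝ) * (1 + Real.log s) ^ r := by
          refine sum_le_sum fun d hd => (ih _).trans ?_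
          obtain ⟨hd1, hds⟩ := Finset.mem_Icc.mp hd
          have hsd : 0 < s / d := Nat.div_pos hds hd1
          gcongr
          · exact Nat.cast_div_le
          · exact Nat.div_le_self s d
      _ = (∑ d ∈ Icc 1 s, (d : ℝ)⁻¹) * (s * (1 + Real.log s) ^ r) := by
          rw [sum_mul]; refine sum_congr rfl fun d _ => by ring
      _ ≤ (1 + Real.log s) * (s * (1 + Real.log s) ^ r) := by
          gcongr; simpa [harmonic_eq_sum_Icc] using harmonic_le_one_add_log s
      _ = s * (1 + Real.log s) ^ (r + 1) := by ring

lemma prod_card_box_le {ι κ : Type*} [Fintype ι] [DecidableEq ι] [Fintype κ] {a : κ → ℕ}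
    (ha : ∀ j, a j ≠ 0) :
    ∏ j, #(box (a j) : Finset (ι → ℤ)) ≤
      6 ^ (Fintype.card ι * Fintype.card κ) * (∏ j, a j) ^ (Fintype.card ι - 1) := by
  calc ∏ j, #(box (a j) : Finset (ι → ℤ))
      ≤ ∏ j, 6 ^ Fintype.card ι * a j ^ (Fintype.card ι - 1) :=
        prod_le_prod' fun j _ => Pi.card_box_le (ha j)
    _ = _ := by rw [prod_mul_distrib, prod_const, prod_pow, card_univ, pow_mul]

lemma ncard_maxAbs_le (k r s : ℕ) :
    {x : Fin k → Fin r → ℤ | (∀ j, 1 ≤ maxAbs x j) ∧ (∏ j, maxAbs x j) ≤ s}.ncard ≤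
      #(posTuplesProdLe r s) * (6 ^ (k * r) * s ^ (k - 1)) := by
  set T := (posTuplesProdLe r s).biUnion fun a =>
    (Fintype.piFinset fun j => (box (a j) : Finset (Fin k → ℤ))).image Function.swap
  have hsub : {x : Fin k → Fin r → ℤ | (∀ j, 1 ≤ maxAbs x j) ∧ (∏ j, maxAbs x j) ≤ s} ⊆ T := by
    intro x hx
    simp only [T, coe_biUnion, Set.mem_iUnion, coe_image, Set.mem_image, mem_coe,
      Fintype.mem_piFinset]
    exact ⟨maxAbs x, mem_posTuplesProdLe.mpr hx, Function.swap x,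
      fun j => Pi.mem_box_iff_sup_natAbs.mpr rfl, rfl⟩
  calc _ ≤ #T := by simpa using Set.ncard_le_ncard hsub
    _ ≤ ∑ a ∈ posTuplesProdLe r s, ∏ j, #(box (a j) : Finset (Fin k → ℤ)) :=
      card_biUnion_le.trans
        (sum_le_sum fun a _ => card_image_le.trans (Fintype.card_piFinset _).le)
    _ ≤ ∑ a ∈ posTuplesProdLe r s, 6 ^ (k * r) * s ^ (k - 1) := by
      refine sum_le_sum fun a ha => ?_
      obtain ⟨hpos, hprod⟩ := mem_posTuplesProdLe.mp ha
      have hbox := prod_card_box_le (ι := Fin k) fun j => Nat.one_le_iff_ne_zero.mp (hpos j)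
      simpa using hbox.trans (Nat.mul_le_mul_left _ (Nat.pow_le_pow_left hprod _))
    _ = _ := by rw [sum_const, smul_eq_mul]

lemma one_le_log_natCast {s : ℕ} (hs : 3 ≤ s) : 1 ≤ Real.log s := by
  rw [Real.le_log_iff_exp_le (by positivity)]
  calc Real.exp 1 ≤ 3 := by linarith [Real.exp_one_lt_d9]
    _ ≤ s := by exact_mod_cast hs

theorem stmt19 :
    ∃ (K : ℝ) (s₀ : ℕ), 0 < K ∧ ∀ k r s : ℕ, 0 < k → 0 < r → s₀ ≤ s →
      ({x : Fin k → Fin r → ℤ |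
          (∀ j, 1 ≤ maxAbs x j) ∧ (∏ j, maxAbs x j) ≤ s}.ncard : ℝ) ≤
        K ^ (k * r) * (s : ℝ) ^ k * Real.log s ^ (r - 1) := by
  refine ⟨12, 3, by norm_num, fun k r s hk hr hs => ?_⟩
  obtain ⟨r, rfl⟩ := Nat.exists_eq_add_one_of_ne_zero hr.ne'
  have hlog := one_le_log_natCast hs
  have hs_pow : (s : ℝ) * s ^ (k - 1) = s ^ k := by rw [← pow_succ']; congr; omega
  calc _ ≤ (#(posTuplesProdLe (r + 1) s) : ℝ) * (6 ^ (k * (r + 1)) * s ^ (k - 1)) := by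
        exact_mod_cast ncard_maxAbs_le k (r + 1) s
    _ ≤ s * (2 * Real.log s) ^ r * (6 ^ (k * (r + 1)) * s ^ (k - 1)) := by
        gcongr
        exact (card_posTuplesProdLe_succ_le r s).trans (by gcongr; linarith)
    _ = 6 ^ (k * (r + 1)) * 2 ^ r * s ^ k * Real.log s ^ r := by rw [mul_pow, ← hs_pow]; ring
    _ ≤ 6 ^ (k * (r + 1)) * 2 ^ (k * (r + 1)) * s ^ k * Real.log s ^ r := by
        gcongr
        · norm_num
        · nlinarith
    _ = _ := by rw [← mul_pow, Nat.add_sub_cancel]; norm_num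
end
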